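/- arXiv:1511.08234 — 3 statements merged into one kernel-verified Lean document; each statement's English description precedes it below -/
import Mathlib

section
/- Let $A$ be an $n\times n$ matrix over a commutative ring, $n\ge 2$. Then $\det A \cdot \det A_{\hat r_1 \hat r_2}^{\hat c_1 \hat c_2} = \det A_{\hat r_1}^{\hat c_1}\cdot \det A_{\hat r_2}^{\hat c_2} - \det A_{\hat r_2}^{\hat c_1}\cdot \det A_{\hat r_1}^{\hat c_2}$, where $A_{\hat r}^{\hat c}$ denotes the matrix with row $r$ and column $c$ deleted, and $A_{\hat r_1\hat r_2}^{\hat c_1\hat c_2}$ has rows $r_1,r_2$ and columns $c_1,c_2$ deleted (assume $r_1<r_2$, $c_1<c_2$). -/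
set_option linter.unusedSectionVars false

open Matrix

section Aux
variable {R : Type*} [CommRing R]

lemma dj_det_updateCol_single {k : ℕ} (B : Matrix (Fin (k+1)) (Fin (k+1)) R)
    (r c : Fin (k+1)) :
    (B.updateCol c (Pi.single r 1)).det
      = (-1) ^ (r.1 + c.1) * (B.submatrix r.succAbove c.succAbove).det := by
  have h := Matrix.adjugate_fin_succ_eq_det_submatrix Bᵀ r c
  rw [Matrix.adjugate_apply, Matrix.updateRow_transpose, Matrix.det_transpose] at h
  rw [h, ← Matrix.transpose_submatrix, Matrix.det_transpose, add_comm]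

lemma dj_updateCol_comm {m k : Type*} [DecidableEq k] (B : Matrix m k R)
    {c c' : k} (h : c ≠ c') (u v : m → R) :
    (B.updateCol c u).updateCol c' v = (B.updateCol c' v).updateCol c u := by
  ext i j
  by_cases h1 : j = c' <;> by_cases h2 : j = c <;>
    simp_all [Matrix.updateCol_apply]

lemma dj_submatrix_updateCol {k l : ℕ} (B : Matrix (Fin k) (Fin k) R)
    (f : Fin l → Fin k) {g : Fin l → Fin k} (hg : Function.Injective g)
    {c : Fin k} {c' : Fin l} (hc : g c' = c) (v : Fin k → R) :
    (B.updateCol c v).submatrix f g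
      = (B.submatrix f g).updateCol c' (fun i => v (f i)) := by
  ext i j
  by_cases h1 : j = c'
  · subst h1; simp [Matrix.updateCol_apply, hc]
  · have : g j ≠ c := fun hh => h1 (hg (hh.trans hc.symm))
    simp [Matrix.updateCol_apply, h1, this]

end Aux

section Key
variable {R : Type*} [CommRing R]

lemma dj_key {n : ℕ} (A : Matrix (Fin (n+2)) (Fin (n+2)) R)
    (r1 r2 c1 c2 : Fin (n+2)) (r2' c2' : Fin (n+1))
    (hc12 : c1 ≠ c2)
    (hr2 : r2.1 = r2'.1 + 1) (hc2 : c2.1 = c2'.1 + 1)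
    (hrs : r1.succAbove r2' = r2) (hcs : c1.succAbove c2' = c2) :
    A.det * ((A.submatrix r1.succAbove c1.succAbove).det *
        (A.submatrix r2.succAbove c2.succAbove).det -
      (A.submatrix r2.succAbove c1.succAbove).det *
        (A.submatrix r1.succAbove c2.succAbove).det)
    = A.det * (A.det *
        (A.submatrix (r1.succAbove ∘ r2'.succAbove) (c1.succAbove ∘ c2'.succAbove)).det) := by
  classical
  set e1 : Fin (n+2) → R := Pi.single r1 1 with he1
  set e2 : Fin (n+2) → R := Pi.single r2 1 with he2
  set U : Matrix (Fin (n+2)) (Fin 2) R := Matrix.of fun i k =>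
    if k = 0 then A.adjugate i r1 - (1 : Matrix (Fin (n+2)) (Fin (n+2)) R) i c1
    else A.adjugate i r2 - (1 : Matrix (Fin (n+2)) (Fin (n+2)) R) i c2 with hU
  set V : Matrix (Fin 2) (Fin (n+2)) R := Matrix.of fun k j =>
    if k = 0 then (1 : Matrix (Fin (n+2)) (Fin (n+2)) R) c1 j
    else (1 : Matrix (Fin (n+2)) (Fin (n+2)) R) c2 j with hV
  have hsum : ∀ (i r c : Fin (n+2)),
      (∑ l, A i l * (A.adjugate l r - (1 : Matrix (Fin (n+2)) (Fin (n+2)) R) l c))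
        = A.det * (1 : Matrix (Fin (n+2)) (Fin (n+2)) R) i r - A i c := by
    intro i r c
    have h1 : (∑ l, A i l * A.adjugate l r) = (A * A.adjugate) i r := (Matrix.mul_apply).symm
    rw [Matrix.mul_adjugate] at h1
    have h2 : (∑ l, A i l * (1 : Matrix (Fin (n+2)) (Fin (n+2)) R) l c) = A i c := by
      simp [Matrix.one_apply, mul_ite, mul_one, mul_zero]
    simp only [mul_sub, Finset.sum_sub_distrib, h1, h2, Matrix.smul_apply, smul_eq_mul]
  have hAU : ∀ (i : Fin (n+2)) (k : Fin 2), (A * U) i k =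
      (if k = 0 then A.det * (1 : Matrix (Fin (n+2)) (Fin (n+2)) R) i r1 - A i c1
       else A.det * (1 : Matrix (Fin (n+2)) (Fin (n+2)) R) i r2 - A i c2) := by
    intro i k
    fin_cases k <;> simp [Matrix.mul_apply, hU, hsum i]
  have hAM : A * (1 + U * V) =
      (A.updateCol c1 (A.det • e1)).updateCol c2 (A.det • e2) := by
    rw [Matrix.mul_add, Matrix.mul_one, ← Matrix.mul_assoc]
    ext i j
    rw [Matrix.add_apply, Matrix.mul_apply, Fin.sum_univ_two, hAU i 0, hAU i 1]
    by_cases hj2 : j = c2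
    · subst hj2
      simp [hV, he2, Matrix.updateCol_apply, Matrix.one_apply, hc12, Pi.single_apply,
        eq_comm]
    · by_cases hj1 : j = c1
      · subst hj1
        simp [hV, he1, Matrix.updateCol_apply, Matrix.one_apply, hj2, Ne.symm hc12,
          Pi.single_apply, eq_comm]
      · simp [hV, Matrix.updateCol_apply, Matrix.one_apply, hj1, hj2,
          Ne.symm hj1, Ne.symm hj2]
  have hdetM : (1 + U * V).det =
      A.adjugate c1 r1 * A.adjugate c2 r2 - A.adjugate c1 r2 * A.adjugate c2 r1 := by
    rw [Matrix.det_one_add_mul_comm, Matrix.det_fin_two]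
    have hVU : ∀ (k : Fin 2) (l : Fin 2), (V * U) k l =
        U (if k = 0 then c1 else c2) l := by
      intro k l
      fin_cases k <;>
        simp [Matrix.mul_apply, hV, Matrix.one_apply, ite_mul, zero_mul, one_mul]
    simp only [Matrix.add_apply, hVU, Matrix.one_apply]
    simp [hU, Matrix.one_apply, hc12, Ne.symm hc12]
    try ring
  have hdetN :
      ((A.updateCol c1 (A.det • e1)).updateCol c2 (A.det • e2)).det
      = A.det * (A.det * ((-1) ^ (r1.1 + c1.1) * ((-1) ^ (r2'.1 + c2'.1) *
          (A.submatrix (r1.succAbove ∘ r2'.succAbove)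
            (c1.succAbove ∘ c2'.succAbove)).det))) := by
    rw [Matrix.det_updateCol_smul, dj_updateCol_comm _ hc12,
      Matrix.det_updateCol_smul, he1, dj_det_updateCol_single,
      dj_submatrix_updateCol _ _ (Fin.succAbove_right_injective) hcs]
    have hv : (fun i => e2 (r1.succAbove i)) = Pi.single r2' (1:R) := by
      funext i
      simp [he2, Pi.single_apply, ← hrs, (Fin.succAbove_right_injective (p := r1)).eq_iff]
    rw [hv, dj_det_updateCol_single, Matrix.submatrix_submatrix]
  have hmain : A.det * (1 + U * V).det =
      ((A.updateCol c1 (A.det • e1)).updateCol c2 (A.det • e2)).det := by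
    rw [← Matrix.det_mul, hAM]
  rw [hdetM, hdetN] at hmain
  rw [Matrix.adjugate_fin_succ_eq_det_submatrix, Matrix.adjugate_fin_succ_eq_det_submatrix,
    Matrix.adjugate_fin_succ_eq_det_submatrix, Matrix.adjugate_fin_succ_eq_det_submatrix,
    hr2, hc2] at hmain
  have hu : IsUnit ((-1 : R) ^ (r1.1 + c1.1 + (r2'.1 + c2'.1))) :=
    (isUnit_one.neg).pow _
  refine hu.mul_left_cancel ?_
  linear_combination hmain

end Key

lemma dj_val_succAbove {m : ℕ} (p : Fin (m+1)) (i : Fin m) :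
    (p.succAbove i).1 = if i.1 < p.1 then i.1 else i.1 + 1 := by
  unfold Fin.succAbove
  split_ifs with h h2 h3
  · rfl
  · exact absurd (show i.1 < p.1 from h) h2
  · exact absurd (show (i.castSucc : Fin (m+1)) < p from h3) h
  · rfl

noncomputable def djX (n : ℕ) : Matrix (Fin n) (Fin n) (MvPolynomial (Fin n × Fin n) ℤ) :=
  Matrix.of fun i j => MvPolynomial.X (i, j)

/-- Desnanot–Jacobi (Dodgson condensation) identity. -/
theorem desnanot_jacobi {R : Type*} [CommRing R] (n : ℕ)
    (A : Matrix (Fin (n+2)) (Fin (n+2)) R)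
    (r1 r2 c1 c2 : Fin (n+2)) (hr : r1 < r2) (hc : c1 < c2) :
    A.det *
      (A.submatrix
        (r2.succAbove ∘ (⟨r1.1, by have h2 := r2.2; have h : r1.1 < r2.1 := hr; omega⟩ : Fin (n+1)).succAbove)
        (c2.succAbove ∘ (⟨c1.1, by have h2 := c2.2; have h : c1.1 < c2.1 := hc; omega⟩ : Fin (n+1)).succAbove)).det =
    (A.submatrix r1.succAbove c1.succAbove).det * (A.submatrix r2.succAbove c2.succAbove).det -
    (A.submatrix r2.succAbove c1.succAbove).det * (A.submatrix r1.succAbove c2.succAbove).det := by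
  classical
  have hrv : r1.1 < r2.1 := hr
  have hcv : c1.1 < c2.1 := hc
  have hr2lt := r2.isLt
  have hc2lt := c2.isLt
  set r2' : Fin (n+1) := ⟨r2.1 - 1, by omega⟩ with hr2'
  set c2' : Fin (n+1) := ⟨c2.1 - 1, by omega⟩ with hc2'
  have hr2 : r2.1 = r2'.1 + 1 := by simp [hr2']; omega
  have hc2 : c2.1 = c2'.1 + 1 := by simp [hc2']; omega
  have hrs : r1.succAbove r2' = r2 := by
    apply Fin.ext
    rw [dj_val_succAbove]
    split_ifs <;> omega
  have hcs : c1.succAbove c2' = c2 := by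
    apply Fin.ext
    rw [dj_val_succAbove]
    split_ifs <;> omega
  have hmap :
      A.submatrix
        (r2.succAbove ∘ (⟨r1.1, by omega⟩ : Fin (n+1)).succAbove)
        (c2.succAbove ∘ (⟨c1.1, by omega⟩ : Fin (n+1)).succAbove)
      = A.submatrix (r1.succAbove ∘ r2'.succAbove) (c1.succAbove ∘ c2'.succAbove) := by
    ext i j
    simp only [Matrix.submatrix_apply, Function.comp_apply]
    congr 1 <;>
      · apply Fin.ext
        simp only [dj_val_succAbove]
        split_ifs <;> omega
  rw [hmap]
  have hXdet : (djX (n+2)).det ≠ 0 := by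
    intro h
    have h2 := congrArg
      (MvPolynomial.eval (fun p : Fin (n+2) × Fin (n+2) => if p.1 = p.2 then (1:ℤ) else 0)) h
    rw [map_zero, RingHom.map_det] at h2
    have h3 : (MvPolynomial.eval
        (fun p : Fin (n+2) × Fin (n+2) => if p.1 = p.2 then (1:ℤ) else 0)).mapMatrix (djX (n+2))
        = (1 : Matrix (Fin (n+2)) (Fin (n+2)) ℤ) := by
      ext i j
      simp [djX, Matrix.one_apply, RingHom.mapMatrix_apply, Matrix.map_apply]
    rw [h3, Matrix.det_one] at h2
    exact one_ne_zero h2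
  have hgen := dj_key (djX (n+2)) r1 r2 c1 c2 r2' c2' (ne_of_lt hc) hr2 hc2 hrs hcs
  have hgen2 := mul_left_cancel₀ hXdet hgen
  have hφ := congrArg (MvPolynomial.eval₂Hom (Int.castRingHom R) (fun p => A p.1 p.2)) hgen2
  have hXA : (djX (n+2)).map (MvPolynomial.eval₂Hom (Int.castRingHom R) (fun p => A p.1 p.2)) = A := by
    ext i j
    simp [djX, Matrix.map_apply]
  simp only [_root_.map_mul, _root_.map_sub, RingHom.map_det, RingHom.mapMatrix_apply,
    ← Matrix.submatrix_map, hXA] at hφ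
  exact hφ.symm
end

section
/- Let $B$ be an $(m+1)\times m$ matrix over a commutative ring ($m\ge 2$), let $r_1<r_2<r_3$ be row indices and $c_1$ a column index. Then $\det B_{\hat r_1}\cdot \det B_{\hat r_2\hat r_3}^{\hat c_1} = \det B_{\hat r_2}\cdot \det B_{\hat r_1\hat r_3}^{\hat c_1} - \det B_{\hat r_3}\cdot \det B_{\hat r_1\hat r_2}^{\hat c_1}$. -/
/-!
The signed maximal minors `(-1)^i det B_î` form a vector annihilating every column of `B`:
pairing it with column `j` is the expansion along the first column of `[B_{·j} | B]`, which
has a repeated column. Hence it annihilates every linear form in the rows of `B`, in particular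
`x ↦ det [x; B_D]` with column `c₁` deleted, where `D` lists the rows other than `r₁, r₂, r₃`.
That form vanishes on the rows in `D`, so only three terms survive, and on `B_{r_a}` it equals
`± det B^{ĉ₁}` with the other two rows deleted, the sign coming from moving row `r_a` to the top.
-/

namespace Fin

theorem val_succAbove_eq_ite {n : ℕ} (p : Fin (n + 1)) (i : Fin n) :
    (p.succAbove i : ℕ) = if (i : ℕ) < p then (i : ℕ) else (i : ℕ) + 1 := by
  unfold succAbove
  split_ifs <;> simp_all [lt_def]

theorem succAbove_succAbove_three_holes {n : ℕ} {r1 r2 r3 : Fin (n + 3)}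
    (h12 : r1 < r2) (h23 : r2 < r3) {r1' r2' : Fin (n + 2)}
    (hr1' : (r1' : ℕ) = r1) (hr2' : (r2' : ℕ) = r2) {p1 p2 p3 : Fin (n + 1)}
    (hp1 : (p1 : ℕ) = r1) (hp2 : (p2 : ℕ) = r2 - 1) (hp3 : (p3 : ℕ) = r3 - 2) :
    r3.succAbove r2' = r2 ∧ r3.succAbove (r2'.succAbove p1) = r1 ∧
    (r3.succAbove ∘ r1'.succAbove) p2 = r2 ∧ (r2.succAbove ∘ r1'.succAbove) p3 = r3 ∧
    (r3.succAbove ∘ r1'.succAbove) ∘ p2.succAbove =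
      r3.succAbove ∘ r2'.succAbove ∘ p1.succAbove ∧
    (r2.succAbove ∘ r1'.succAbove) ∘ p3.succAbove =
      r3.succAbove ∘ r2'.succAbove ∘ p1.succAbove := by
  rw [lt_def] at h12 h23
  refine ⟨?_, ?_, ?_, ?_, funext fun t => ?_, funext fun t => ?_⟩ <;> ext <;>
    simp only [Function.comp_apply, val_succAbove_eq_ite, hr1', hr2', hp1, hp2, hp3] <;>
    split_ifs <;> omega

end Fin

namespace Matrix

variable {R : Type*} [CommRing R]

theorem vecMul_neg_one_pow_mul_det_submatrix_succAbove_eq_zero {n : ℕ}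
    (B : Matrix (Fin (n + 1)) (Fin n) R) :
    (fun i : Fin (n + 1) => (-1) ^ (i : ℕ) * (B.submatrix i.succAbove id).det) ᵥ* B = 0 := by
  ext j
  let A : Matrix (Fin (n + 1)) (Fin (n + 1)) R := of fun i => Fin.cons (B i j) (B i)
  have hA : A.det = 0 := det_zero_of_column_eq (Fin.succ_ne_zero j).symm fun i => rfl
  have hminor (i : Fin (n + 1)) :
      A.submatrix i.succAbove Fin.succ = B.submatrix i.succAbove id := by
    ext; simp [A]
  rw [det_succ_column_zero] at hA
  simpa only [vecMul, dotProduct, hminor, A, of_apply, Fin.cons_zero, mul_right_comm,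
    Pi.zero_apply] using hA

theorem sum_neg_one_pow_mul_det_submatrix_succAbove_mul_det_submatrix_cons_eq_zero {n m : ℕ}
    (B : Matrix (Fin (n + 1)) (Fin n) R) (d : Fin m → Fin (n + 1)) (col : Fin (m + 1) → Fin n) :
    ∑ i : Fin (n + 1), (-1) ^ (i : ℕ) * (B.submatrix i.succAbove id).det *
      (B.submatrix (Fin.cons i d) col).det = 0 := by
  have hcol (j) :
      ∑ i : Fin (n + 1), (-1) ^ (i : ℕ) * (B.submatrix i.succAbove id).det * B i (col j) = 0 :=
    congr_fun (vecMul_neg_one_pow_mul_det_submatrix_succAbove_eq_zero B) (col j)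
  simp_rw [det_succ_row_zero, Finset.mul_sum]
  rw [Finset.sum_comm]
  refine Finset.sum_eq_zero fun j _ => ?_
  simp only [submatrix_apply, Fin.cons_zero, submatrix_submatrix, Fin.cons_comp_succ]
  rw [← zero_mul ((-1 : R) ^ (j : ℕ) * (B.submatrix d (col ∘ j.succAbove)).det), ← hcol j,
    Finset.sum_mul]
  exact Finset.sum_congr rfl fun _ _ => by ring

theorem det_submatrix_cons_eq_neg_one_pow_mul {ι κ : Type*} {m : ℕ} (M : Matrix ι κ R)
    (e : Fin (m + 1) → ι) (col : Fin (m + 1) → κ) (p : Fin (m + 1)) {i : ι} {d : Fin m → ι}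
    (hi : e p = i) (hd : e ∘ p.succAbove = d) :
    (M.submatrix (Fin.cons i d) col).det = (-1) ^ (p : ℕ) * (M.submatrix e col).det := by
  subst hi hd
  have he : (Fin.cons (e p) (e ∘ p.succAbove) : Fin (m + 1) → ι) = e ∘ p.cycleRange.symm := by
    ext i
    refine Fin.cases ?_ (fun t => ?_) i
    · simp [Fin.cycleRange_symm_zero]
    · simp [Fin.cycleRange_symm_succ]
  rw [he, show M.submatrix (e ∘ p.cycleRange.symm) col
      = (M.submatrix e col).submatrix p.cycleRange.symm id from rfl, det_permute]
  simp [Fin.sign_cycleRange]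

theorem det_mul_det_submatrix_succAbove_comp_succAbove {k : ℕ}
    (B : Matrix (Fin (k + 3)) (Fin (k + 2)) R) {r1 r2 r3 : Fin (k + 3)} (h12 : r1 < r2)
    (h23 : r2 < r3) (c1 : Fin (k + 2)) {r1' r2' : Fin (k + 2)} (hr1' : (r1' : ℕ) = r1)
    (hr2' : (r2' : ℕ) = r2) :
    (B.submatrix r1.succAbove id).det *
      (B.submatrix (r3.succAbove ∘ r2'.succAbove) c1.succAbove).det =
    (B.submatrix r2.succAbove id).det *
      (B.submatrix (r3.succAbove ∘ r1'.succAbove) c1.succAbove).det -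
    (B.submatrix r3.succAbove id).det *
      (B.submatrix (r2.succAbove ∘ r1'.succAbove) c1.succAbove).det := by
  have h12' : (r1 : ℕ) < r2 := h12
  have h23' : (r2 : ℕ) < r3 := h23
  have hr3 := r3.isLt
  -- `p_a` is the position of row `r_a` in the minor that omits the other two rows.
  set p1 : Fin (k + 1) := ⟨r1, by omega⟩
  set p2 : Fin (k + 1) := ⟨r2 - 1, by omega⟩
  set p3 : Fin (k + 1) := ⟨r3 - 2, by omega⟩
  obtain ⟨hr2, hr1, he2, he3, hd2, hd3⟩ :=
    Fin.succAbove_succAbove_three_holes h12 h23 hr1' hr2' (p1 := p1) (p2 := p2) (p3 := p3)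
      rfl rfl rfl
  set d := r3.succAbove ∘ r2'.succAbove ∘ p1.succAbove with hd
  have htop1 := det_submatrix_cons_eq_neg_one_pow_mul B (r3.succAbove ∘ r2'.succAbove)
    c1.succAbove p1 hr1 hd.symm
  have htop2 := det_submatrix_cons_eq_neg_one_pow_mul B _ c1.succAbove p2 he2 hd2
  have htop3 := det_submatrix_cons_eq_neg_one_pow_mul B _ c1.succAbove p3 he3 hd3
  have hrepeat (t) : (B.submatrix (Fin.cons (r3.succAbove (r2'.succAbove (p1.succAbove t))) d)
      c1.succAbove).det = 0 :=
    det_zero_of_row_eq (Fin.succ_ne_zero t).symm rfl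
  have hsum :=
    sum_neg_one_pow_mul_det_submatrix_succAbove_mul_det_submatrix_cons_eq_zero B d c1.succAbove
  rw [Fin.sum_univ_succAbove _ r3, Fin.sum_univ_succAbove _ r2', Fin.sum_univ_succAbove _ p1,
    hr2, hr1] at hsum
  simp only [hrepeat, mul_zero, Finset.sum_const_zero, add_zero, htop1, htop2, htop3] at hsum
  have hsign1 : (-1 : R) ^ (r1 : ℕ) * (-1) ^ (p1 : ℕ) = 1 := by
    rw [← pow_add]; exact Even.neg_one_pow ⟨r1, rfl⟩
  have hsign2 : (-1 : R) ^ (r2 : ℕ) * (-1) ^ (p2 : ℕ) = -1 := by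
    rw [← pow_add]; exact Odd.neg_one_pow ⟨r2 - 1, by simp only [p2]; omega⟩
  have hsign3 : (-1 : R) ^ (r3 : ℕ) * (-1) ^ (p3 : ℕ) = 1 := by
    rw [← pow_add]; exact Even.neg_one_pow ⟨r3 - 1, by simp only [p3]; omega⟩
  linear_combination hsum - (B.submatrix r1.succAbove id).det *
      (B.submatrix (r3.succAbove ∘ r2'.succAbove) c1.succAbove).det * hsign1 -
    (B.submatrix r2.succAbove id).det *
      (B.submatrix (r3.succAbove ∘ r1'.succAbove) c1.succAbove).det * hsign2 -
    (B.submatrix r3.succAbove id).det *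
      (B.submatrix (r2.succAbove ∘ r1'.succAbove) c1.succAbove).det * hsign3

end Matrix

/-- Non-square variant of the Desnanot–Jacobi identity for a matrix with one more
row than columns. Here `m = k+2 ≥ 2`. -/
theorem desnanot_jacobi_nonsquare {R : Type*} [CommRing R] (k : ℕ)
    (B : Matrix (Fin (k+3)) (Fin (k+2)) R)
    (r1 r2 r3 : Fin (k+3)) (h12 : r1 < r2) (h23 : r2 < r3) (c1 : Fin (k+2)) :
    (B.submatrix r1.succAbove id).det *
      (B.submatrix
        (r3.succAbove ∘ (⟨r2.1, by have h3 := r3.2; have h : r2.1 < r3.1 := h23; omega⟩ : Fin (k+2)).succAbove)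
        c1.succAbove).det =
    (B.submatrix r2.succAbove id).det *
      (B.submatrix
        (r3.succAbove ∘ (⟨r1.1, by have h3 := r3.2; have h : r1.1 < r3.1 := lt_trans h12 h23; omega⟩ : Fin (k+2)).succAbove)
        c1.succAbove).det -
    (B.submatrix r3.succAbove id).det *
      (B.submatrix
        (r2.succAbove ∘ (⟨r1.1, by have h2 := r2.2; have h : r1.1 < r2.1 := h12; omega⟩ : Fin (k+2)).succAbove)
        c1.succAbove).det :=
  Matrix.det_mul_det_submatrix_succAbove_comp_succAbove B h12 h23 c1 rfl rfl
end

section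
/- Let $A$ be an $m\times m$ matrix over a commutative ring, $m\ge 2$, and let $\ell=m$ denote the last row/column. Then $\det A\cdot \det A_{\hat 1\hat\ell}^{\hat 1\hat\ell} + \det A_{\hat 1}^{\hat\ell}\cdot\det A_{\hat\ell}^{\hat 1} = \det A_{\hat 1}^{\hat 1}\cdot \det A_{\hat\ell}^{\hat\ell}$. -/
/-!
Multiplying `A` by the identity matrix whose columns `i ≠ j` are replaced by the corresponding
columns of `adjugate A` gives `A` with those columns replaced by `det A • eᵢ` and `det A • eⱼ`.
Taking determinants, `det A` times the `{i, j}` principal 2×2 minor of `adjugate A` equals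
`det A ^ 2` times the complementary principal minor of `A`. Cancelling one factor `det A` is
legitimate for the generic matrix over `ℤ[xₚₖ]`, so the cancelled identity holds for every
matrix. For `i = 0`, `j = last`, the four adjugate entries are the corner minors of the theorem,
and the off-diagonal signs `(-1) ^ (m + 1)` cancel in their product.
-/

open Matrix

namespace Matrix

variable {n R : Type*} [Fintype n] [DecidableEq n] [CommRing R]

theorem det_one_updateCol_updateCol {i j : n} (hij : i ≠ j) (u v : n → R) :
    (((1 : Matrix n n R).updateCol i u).updateCol j v).det = u i * v j - u j * v i := by
  -- A rank-two perturbation `1 + U * V` of the identity; Weinstein–Aronszajn moves it to `Fin 2`.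
  let U : Matrix n (Fin 2) R := (of ![u - Pi.single i 1, v - Pi.single j 1])ᵀ
  let V : Matrix (Fin 2) n R := of ![Pi.single i 1, Pi.single j 1]
  have hUV : ((1 : Matrix n n R).updateCol i u).updateCol j v = 1 + U * V := by
    ext r c
    simp only [updateCol_apply, add_apply, mul_apply, Fin.sum_univ_two, U, V, transpose_apply,
      of_apply, one_apply]
    split_ifs <;> simp_all
  have hVU : 1 + V * U = !![u i, v i; u j, v j] := by
    ext k l
    fin_cases k <;> fin_cases l <;> simp [U, V, hij, hij.symm]
  rw [hUV, det_one_add_mul_comm, hVU, det_fin_two_of]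
  ring

theorem det_updateCol_single_updateCol_single (A : Matrix n n R) {i j : n} (hij : i ≠ j) :
    ((A.updateCol i (Pi.single i 1)).updateCol j (Pi.single j 1)).det
      = (A.toSquareBlockProp fun k => ¬(k = i ∨ k = j)).det := by
  set B := (A.updateCol i (Pi.single i 1)).updateCol j (Pi.single j 1)
  have hcorner : B.toSquareBlockProp (fun k => k = i ∨ k = j) = 1 := by
    ext ⟨r, hr⟩ ⟨c, rfl | rfl⟩ <;>
      simp [B, toSquareBlockProp, toBlock, Pi.single_apply, one_apply, hij]
  have hcompl : B.toSquareBlockProp (fun k => ¬(k = i ∨ k = j)) =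
      A.toSquareBlockProp fun k => ¬(k = i ∨ k = j) := by
    ext r ⟨c, hc⟩
    rw [not_or] at hc
    simp [B, toSquareBlockProp, toBlock, hc.1, hc.2]
  rw [twoBlockTriangular_det B (fun k => k = i ∨ k = j), hcorner, hcompl, det_one, one_mul]
  rintro r hr c (rfl | rfl) <;> rw [not_or] at hr <;> simp [B, hij, hr.1, hr.2]

theorem det_mul_adjugate_two_minor {i j : n} (hij : i ≠ j) (A : Matrix n n R) :
    A.det * (adjugate A i i * adjugate A j j - adjugate A j i * adjugate A i j)
      = A.det * (A.det * (A.toSquareBlockProp fun k => ¬(k = i ∨ k = j)).det) := by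
  have hcol : ∀ k, A *ᵥ (adjugate A).col k = A.det • Pi.single k 1 := fun k => by
    rw [← mulVec_single_one, mulVec_mulVec, mul_adjugate, smul_mulVec, one_mulVec]
  calc A.det * (adjugate A i i * adjugate A j j - adjugate A j i * adjugate A i j)
      = (A * ((1 : Matrix n n R).updateCol i ((adjugate A).col i)).updateCol j
          ((adjugate A).col j)).det := by
        rw [det_mul, det_one_updateCol_updateCol hij]
        rfl
    _ = ((A.updateCol i (A.det • Pi.single i 1)).updateCol j (A.det • Pi.single j 1)).det := by
        rw [mul_updateCol, mul_updateCol, mul_one, hcol, hcol]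
    _ = A.det * (A.det * (A.toSquareBlockProp fun k => ¬(k = i ∨ k = j)).det) := by
        rw [det_updateCol_smul, updateCol_comm _ hij, det_updateCol_smul,
          updateCol_comm _ hij.symm, det_updateCol_single_updateCol_single A hij]

theorem adjugate_two_minor_eq_det_mul_det_compl {i j : n} (hij : i ≠ j) (A : Matrix n n R) :
    adjugate A i i * adjugate A j j - adjugate A j i * adjugate A i j
      = A.det * (A.toSquareBlockProp fun k => ¬(k = i ∨ k = j)).det := by
  let X := mvPolynomialX n n ℤ
  have hX : adjugate X i i * adjugate X j j - adjugate X j i * adjugate X i j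
      = X.det * (X.toSquareBlockProp fun k => ¬(k = i ∨ k = j)).det :=
    mul_left_cancel₀ (det_mvPolynomialX_ne_zero n ℤ) (det_mul_adjugate_two_minor hij X)
  let f : MvPolynomial (n × n) ℤ →+* R :=
    MvPolynomial.eval₂Hom (Int.castRingHom R) fun p => A p.1 p.2
  have hA : f.mapMatrix X = A := mvPolynomialX_map_eval₂ _ A
  have hadj : ∀ a b, f (adjugate X a b) = adjugate A a b := fun a b => by
    rw [← hA, ← RingHom.map_adjugate]
    rfl
  have hblock : f.mapMatrix (X.toSquareBlockProp fun k => ¬(k = i ∨ k = j))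
      = A.toSquareBlockProp fun k => ¬(k = i ∨ k = j) := by
    rw [← hA]
    rfl
  have := congrArg f hX
  rwa [map_sub, map_mul, map_mul, map_mul, hadj, hadj, hadj, hadj, RingHom.map_det,
    RingHom.map_det, hA, hblock] at this

theorem det_toSquareBlockProp_compl_zero_last {m : ℕ}
    (A : Matrix (Fin (m + 2)) (Fin (m + 2)) R) :
    (A.toSquareBlockProp fun k => ¬(k = 0 ∨ k = Fin.last (m + 1))).det
      = (A.submatrix (fun k : Fin m => k.succ.castSucc) fun k => k.succ.castSucc).det := by
  let e : Fin m ≃ {k : Fin (m + 2) // ¬(k = 0 ∨ k = Fin.last (m + 1))} :=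
    Equiv.ofBijective (fun k => ⟨k.succ.castSucc, by simp [Fin.ext_iff, k.isLt.ne]⟩) <| by
      refine ⟨fun a b h => by simpa using h, ?_⟩
      rintro ⟨k, hk⟩
      induction k using Fin.cases with
      | zero => simp at hk
      | succ k =>
        induction k using Fin.lastCases with
        | last => simp at hk
        | cast k => exact ⟨k, Subtype.ext (Fin.succ_castSucc k).symm⟩
  exact (det_submatrix_equiv_self e _).symm

end Matrix

/-- The special case `r₁ = c₁ = 1`, `r₂ = c₂ = m` of the Desnanot–Jacobi identity:
`det A · det A_{1̂ℓ̂}^{1̂ℓ̂} + det A_{1̂}^{ℓ̂} · det A_{ℓ̂}^{1̂} = det A_{1̂}^{1̂} · det A_{ℓ̂}^{ℓ̂}`. -/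
theorem desnanot_jacobi_corners {R : Type*} [CommRing R] (m : ℕ)
    (A : Matrix (Fin (m+2)) (Fin (m+2)) R) :
    A.det * (A.submatrix (fun i : Fin m => i.succ.castSucc) (fun j : Fin m => j.succ.castSucc)).det
      + (A.submatrix Fin.succ Fin.castSucc).det * (A.submatrix Fin.castSucc Fin.succ).det
    = (A.submatrix Fin.succ Fin.succ).det * (A.submatrix Fin.castSucc Fin.castSucc).det := by
  have h := adjugate_two_minor_eq_det_mul_det_compl (Fin.last_pos (n := m)).ne A
  simp only [adjugate_fin_succ_eq_det_submatrix, Fin.succAbove_zero, Fin.succAbove_last,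
    Fin.val_zero, Fin.val_last, det_toSquareBlockProp_compl_zero_last] at h
  have hsign : (-1 : R) ^ (m + 1 + (m + 1)) = 1 := (Even.add_self _).neg_one_pow
  linear_combination -h + ((A.submatrix Fin.succ Fin.succ).det *
    (A.submatrix Fin.castSucc Fin.castSucc).det - (A.submatrix Fin.succ Fin.castSucc).det *
    (A.submatrix Fin.castSucc Fin.succ).det) * hsign
end
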